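/- Let G be a POMDP with absorbing target set T, positive costs, and Supp(λ0) ∈ BeliefWin(G,T). Then optCost ≤ U_Allow, where U_Allow is the maximum over all U ∈ BeliefWin(G,T) and s ∈ U of the expected total cost of the strategy σ_Allow started in state s with initial belief-support U. -/

import Mathlib

open Finset Filter
open scoped Classical

set_option linter.unusedSectionVars false

noncomputable section

/-- A finite history of a play: the current state together with the
(reversed) list of past steps; an entry `(a, s')` means: the action `a`
was taken from the state `s'` (leading to the next recorded state). -/
abbrev Hist (S A : Type) := S × List (A × S)

/-- The observation–action sequence of a history. -/
def obsHist {S A Z : Type} (O : S → Z) (h : Hist S A) : Z × List (A × Z) :=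
  (O h.1, h.2.map fun p => (p.1, O p.2))

/-- An observation-based (randomized, history-dependent) strategy. -/
structure Strategy (S A Z : Type) [Fintype A] (O : S → Z) where
  act : Hist S A → A → ℝ
  act_nonneg : ∀ h a, 0 ≤ act h a
  act_sum : ∀ h, ∑ a, act h a = 1
  obsBased : ∀ h h', obsHist O h = obsHist O h' → act h = act h'

/-- A partially observable Markov decision process. -/
structure POMDP (S A Z : Type) [Fintype S] [Fintype A] [Fintype Z] where
  δ : S → A → S → ℝ
  δ_nonneg : ∀ s a s', 0 ≤ δ s a s'
  δ_sum : ∀ s a, ∑ s', δ s a s' = 1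
  obs : S → Z
  init : S → ℝ
  init_nonneg : ∀ s, 0 ≤ init s
  init_sum : ∑ s, init s = 1
  init_obs : ∀ s s', 0 < init s → 0 < init s' → obs s = obs s'

namespace POMDP

variable {S A Z : Type} [Fintype S] [Fintype A] [Fintype Z]

/-- The target set `T` consists of absorbing states. -/
def Absorbing (M : POMDP S A Z) (T : Set S) : Prop :=
  ∀ t ∈ T, ∀ a, M.δ t a t = 1

/-- Probability that after `n` steps the process has followed exactly the
history `(s, l)` (so `l` has length `n`). -/
def hprobAux (M : POMDP S A Z) (σ : Strategy S A Z M.obs) : ℕ → S → List (A × S) → ℝ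
  | 0, s, l => if l = [] then M.init s else 0
  | n+1, s, l =>
    match l with
    | [] => 0
    | (a, s') :: rest => hprobAux M σ n s' rest * σ.act (s', rest) a * M.δ s' a s

def hprob (M : POMDP S A Z) (σ : Strategy S A Z M.obs) (n : ℕ) (h : Hist S A) : ℝ :=
  M.hprobAux σ n h.1 h.2

/-- The state sequence of a history visits the set `T`. -/
def visitsT (T : Set S) (h : Hist S A) : Prop :=
  h.1 ∈ T ∨ ∃ p ∈ h.2, p.2 ∈ T

/-- Probability of reaching `T` within the first `n` steps. -/
def probReachBy (M : POMDP S A Z) (T : Set S) (σ : Strategy S A Z M.obs) (n : ℕ) : ℝ :=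
  ∑' h : Hist S A, if visitsT T h then M.hprob σ n h else 0

/-- Probability of the reachability objective `Reach(T)`. -/
def probReach (M : POMDP S A Z) (T : Set S) (σ : Strategy S A Z M.obs) : ℝ :=
  ⨆ n, M.probReachBy T σ n

/-- The strategy `σ` is almost-sure winning for `Reach(T)`. -/
def AlmostSure (M : POMDP S A Z) (T : Set S) (σ : Strategy S A Z M.obs) : Prop :=
  M.probReach T σ = 1

/-- Accumulated cost along a history. -/
def totalCostAux (c : S → A → ℝ) : S → List (A × S) → ℝ
  | _, [] => 0
  | _, (a, s') :: rest => totalCostAux c s' rest + c s' a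

def totalCostH (c : S → A → ℝ) (h : Hist S A) : ℝ := totalCostAux c h.1 h.2

/-- Expected total cost of the first `n` steps, i.e. `E[Total_{n-1}]`
(in particular `E[Total_k] = expTotalSteps M c σ (k+1)`). -/
def expTotalSteps (M : POMDP S A Z) (c : S → A → ℝ) (σ : Strategy S A Z M.obs) (n : ℕ) : ℝ :=
  ∑' h : Hist S A, M.hprob σ n h * totalCostH c h

/-- The value `Val(σ) = E[Total]` of a strategy, as the limit (limsup) of the
expected costs of the finite prefixes. -/
def Val (M : POMDP S A Z) (c : S → A → ℝ) (σ : Strategy S A Z M.obs) : EReal :=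
  Filter.limsup (fun n => ((M.expTotalSteps c σ n : ℝ) : EReal)) Filter.atTop

/-- `optCost`: the infimum of the values of almost-sure winning strategies. -/
def optCost (M : POMDP S A Z) (T : Set S) (c : S → A → ℝ) : EReal :=
  ⨅ σ : {σ : Strategy S A Z M.obs // M.AlmostSure T σ}, M.Val c σ.1

end POMDP

namespace POMDP

variable {S A Z : Type} [Fintype S] [Fintype A] [Fintype Z]

/-- Uniform distribution over a finite set of states. -/
def uniformS (U : Finset S) : S → ℝ := fun s => if s ∈ U then ((U.card : ℝ))⁻¹ else 0

lemma uniformS_nonneg (U : Finset S) (s : S) : 0 ≤ uniformS U s := by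
  unfold uniformS; split_ifs <;> positivity

lemma uniformS_sum (U : Finset S) (h : U.Nonempty) : ∑ s, uniformS U s = 1 := by
  unfold uniformS
  rw [Finset.sum_ite_mem, Finset.univ_inter, Finset.sum_const, nsmul_eq_mul,
    mul_inv_cancel₀]
  exact_mod_cast Finset.card_ne_zero.mpr h

lemma uniformS_mem {U : Finset S} {s : S} (h : 0 < uniformS U s) : s ∈ U := by
  by_contra hc; simp [uniformS, hc] at h

/-- The POMDP `M` with the initial distribution replaced by the uniform
distribution over `U`. -/
def reinit (M : POMDP S A Z) (U : Finset S) (hU : U.Nonempty)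
    (hobs : ∀ s ∈ U, ∀ s' ∈ U, M.obs s = M.obs s') : POMDP S A Z :=
  { M with
    init := uniformS U
    init_nonneg := uniformS_nonneg U
    init_sum := uniformS_sum U hU
    init_obs := fun s s' hs hs' => hobs s (uniformS_mem hs) s' (uniformS_mem hs') }

/-- The POMDP `M` with the initial distribution replaced by the Dirac
distribution at `s0`. -/
def resetDirac (M : POMDP S A Z) (s0 : S) : POMDP S A Z :=
  { M with
    init := fun s => if s = s0 then 1 else 0
    init_nonneg := by intro s; split_ifs <;> norm_num
    init_sum := by simp
    init_obs := by
      intro s s' hs hs'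
      have h1 : s = s0 := by by_contra hc; simp [hc] at hs
      have h2 : s' = s0 := by by_contra hc; simp [hc] at hs'
      rw [h1, h2] }

/-- The set of almost-sure winning belief-supports: those `U` from which
(with the uniform initial distribution on `U`) some strategy wins
`Reach(T)` almost-surely. -/
def BeliefWin (M : POMDP S A Z) (T : Set S) : Set (Finset S) :=
  {U | ∃ (hU : U.Nonempty) (hobs : ∀ s ∈ U, ∀ s' ∈ U, M.obs s = M.obs s'),
      ∃ σ : Strategy S A Z M.obs, (M.reinit U hU hobs).AlmostSure T σ}

/-- Belief-support update. -/
def updateF (M : POMDP S A Z) (U : Finset S) (z : Z) (a : A) : Finset S :=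
  univ.filter (fun t => M.obs t = z ∧ ∃ s ∈ U, 0 < M.δ s a t)

/-- Allowed actions at a belief-support `U`. -/
def AllowSet (M : POMDP S A Z) (T : Set S) (U : Finset S) : Set A :=
  {a | ∀ z, (M.updateF U z a).Nonempty → M.updateF U z a ∈ M.BeliefWin T}

def allowFin (M : POMDP S A Z) (T : Set S) (U : Finset S) : Finset A :=
  univ.filter (· ∈ M.AllowSet T U)

/-- The support of the initial distribution, as a belief-support. -/
def suppInitF (M : POMDP S A Z) : Finset S := univ.filter (fun s => 0 < M.init s)

/-- Belief-support after a history, starting from the initial belief-support `U0`. -/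
def beliefOfFromAux (M : POMDP S A Z) (U0 : Finset S) : S → List (A × S) → Finset S
  | s, [] => U0.filter (fun t => M.obs t = M.obs s)
  | s, (a, s') :: rest => M.updateF (M.beliefOfFromAux U0 s' rest) (M.obs s) a

def beliefOfFrom (M : POMDP S A Z) (U0 : Finset S) (h : Hist S A) : Finset S :=
  M.beliefOfFromAux U0 h.1 h.2

/-- Belief-support after a history (with the initial belief-support being
the support of the initial distribution). -/
def beliefOf (M : POMDP S A Z) (h : Hist S A) : Finset S :=
  M.beliefOfFrom M.suppInitF h

lemma beliefOfFromAux_obs (M : POMDP S A Z) (U0 : Finset S) :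
    ∀ (l l' : List (A × S)) (s s' : S),
      l.map (fun p => (p.1, M.obs p.2)) = l'.map (fun p => (p.1, M.obs p.2)) →
      M.obs s = M.obs s' →
      M.beliefOfFromAux U0 s l = M.beliefOfFromAux U0 s' l'
  | [], [], s, s', _, hs => by simp [beliefOfFromAux, hs]
  | [], (_ :: _), _, _, hmap, _ => by simp at hmap
  | (_ :: _), [], _, _, hmap, _ => by simp at hmap
  | ((a, t) :: r), ((a', t') :: r'), s, s', hmap, hs => by
      simp only [List.map_cons, List.cons.injEq, Prod.mk.injEq] at hmap
      obtain ⟨⟨ha, ht⟩, hr⟩ := hmap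
      simp only [beliefOfFromAux]
      rw [M.beliefOfFromAux_obs U0 r r' t t' hr ht, hs, ha]

/-- Uniform distribution over a finite set of actions. -/
def uniformA (F : Finset A) : A → ℝ := fun a => if a ∈ F then ((F.card : ℝ))⁻¹ else 0

lemma uniformA_nonneg (F : Finset A) (a : A) : 0 ≤ uniformA F a := by
  unfold uniformA; split_ifs <;> positivity

lemma uniformA_sum (F : Finset A) (h : F.Nonempty) : ∑ a, uniformA F a = 1 := by
  unfold uniformA
  rw [Finset.sum_ite_mem, Finset.univ_inter, Finset.sum_const, nsmul_eq_mul,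
    mul_inv_cancel₀]
  exact_mod_cast Finset.card_ne_zero.mpr h

/-- The action distribution of `σ_Allow` (with initial belief-support `U0`):
uniform over the allowed actions of the current belief-support (with a
uniform fallback where no action is allowed). -/
def actAllowFrom (M : POMDP S A Z) (T : Set S) (U0 : Finset S) (h : Hist S A) : A → ℝ :=
  if (M.allowFin T (M.beliefOfFrom U0 h)).Nonempty
  then uniformA (M.allowFin T (M.beliefOfFrom U0 h))
  else uniformA (univ : Finset A)

/-- The belief-support based strategy `σ_Allow` (tracking beliefs from `U0`). -/
def stratAllowFrom [Nonempty A] (M : POMDP S A Z) (T : Set S) (U0 : Finset S) :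
    Strategy S A Z M.obs where
  act := M.actAllowFrom T U0
  act_nonneg := by
    intro h a; unfold actAllowFrom; split_ifs <;> exact uniformA_nonneg _ _
  act_sum := by
    intro h; unfold actAllowFrom; split_ifs with hne
    · exact uniformA_sum _ hne
    · exact uniformA_sum _ univ_nonempty
  obsBased := by
    intro h h' hobs
    have : M.beliefOfFrom U0 h = M.beliefOfFrom U0 h' := by
      unfold beliefOfFrom
      exact M.beliefOfFromAux_obs U0 h.2 h'.2 h.1 h'.1
        (congrArg Prod.snd hobs) (congrArg Prod.fst hobs)
    unfold actAllowFrom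
    rw [this]

/-- `σ_Allow`. -/
def stratAllow [Nonempty A] (M : POMDP S A Z) (T : Set S) : Strategy S A Z M.obs :=
  M.stratAllowFrom T M.suppInitF

/-- `T_Allow(s, U)`: the expected total cost of `σ_Allow` started in the
state `s` with the initial belief-support `U`. -/
def TAllow [Nonempty A] (M : POMDP S A Z) (T : Set S) (c : S → A → ℝ) (s : S) (U : Finset S) :
    EReal :=
  (M.resetDirac s).Val c (M.stratAllowFrom T U)

/-- `U_Allow`: the maximal expected total cost of `σ_Allow` over all
almost-sure winning belief-supports `U` and states `s ∈ U`. -/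
def UAllow [Nonempty A] (M : POMDP S A Z) (T : Set S) (c : S → A → ℝ) : EReal :=
  ⨆ U ∈ M.BeliefWin T, ⨆ s ∈ U, M.TAllow T c s U

end POMDP

namespace POMDP

variable {S A Z : Type} [Fintype S] [Fintype A] [Fintype Z]

/-- Normalization of a nonnegative function into a distribution. -/
def normalize (f : S → ℝ) : S → ℝ := fun t => f t / ∑ u, f u

/-- Support of an information state. -/
def suppF (b : S → ℝ) : Finset S := univ.filter (fun s => b s ≠ 0)

/-- The information state (posterior distribution) after a history. -/
def infoOfAux (M : POMDP S A Z) : S → List (A × S) → S → ℝ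
  | s, [] => normalize (fun t => if M.obs t = M.obs s then M.init t else 0)
  | s, (a, s') :: rest =>
      normalize (fun t => if M.obs t = M.obs s then ∑ u, M.infoOfAux s' rest u * M.δ u a t else 0)

def infoOf (M : POMDP S A Z) (h : Hist S A) : S → ℝ := M.infoOfAux h.1 h.2

lemma infoOfAux_obs (M : POMDP S A Z) :
    ∀ (l l' : List (A × S)) (s s' : S),
      l.map (fun p => (p.1, M.obs p.2)) = l'.map (fun p => (p.1, M.obs p.2)) →
      M.obs s = M.obs s' →
      M.infoOfAux s l = M.infoOfAux s' l'
  | [], [], s, s', _, hs => by simp [infoOfAux, hs]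
  | [], (_ :: _), _, _, hmap, _ => by simp at hmap
  | (_ :: _), [], _, _, hmap, _ => by simp at hmap
  | ((a, t) :: r), ((a', t') :: r'), s, s', hmap, hs => by
      simp only [List.map_cons, List.cons.injEq, Prod.mk.injEq] at hmap
      obtain ⟨⟨ha, ht⟩, hr⟩ := hmap
      simp only [infoOfAux]
      rw [M.infoOfAux_obs r r' t t' hr ht, hs, ha]

/-- Expected one-step cost `c'(b,a)` at an information state. -/
def cinfo (c : S → A → ℝ) (b : S → ℝ) (a : A) : ℝ := ∑ s, b s * c s a

/-- Probability of observing `z` after playing `a` at information state `b`. -/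
def obsProb (M : POMDP S A Z) (b : S → ℝ) (a : A) (z : Z) : ℝ :=
  ∑ t, if M.obs t = z then ∑ u, b u * M.δ u a t else 0

/-- Bayesian update of the information state `b` under action `a` and
observation `z`. -/
def postInfo (M : POMDP S A Z) (b : S → ℝ) (a : A) (z : Z) : S → ℝ :=
  normalize (fun t => if M.obs t = z then ∑ u, b u * M.δ u a t else 0)

/-- The allowed-action-restricted finite-horizon value iteration `V*_n`. -/
def Vstar (M : POMDP S A Z) (T : Set S) (c : S → A → ℝ) : ℕ → (S → ℝ) → ℝ
  | 0, _ => 0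
  | n+1, b =>
    if h : (M.allowFin T (suppF b)).Nonempty then
      (M.allowFin T (suppF b)).inf' h
        (fun a => cinfo c b a + ∑ z, M.obsProb b a z * M.Vstar T c n (M.postInfo b a z))
    else 0

/-- An allowed action attaining the minimum of the value iteration with
`n` steps remaining at information state `b`. -/
def foAct [Nonempty A] (M : POMDP S A Z) (T : Set S) (c : S → A → ℝ) : ℕ → (S → ℝ) → A
  | 0, _ => Classical.arbitrary A
  | n+1, b =>
    if h : (M.allowFin T (suppF b)).Nonempty then
      Classical.choose (Finset.exists_mem_eq_inf' h
        (fun a => cinfo c b a + ∑ z, M.obsProb b a z * M.Vstar T c n (M.postInfo b a z)))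
    else Classical.arbitrary A

/-- The action distribution of the finite-horizon optimal strategy `σFO_k`. -/
def actFO [Nonempty A] (M : POMDP S A Z) (T : Set S) (c : S → A → ℝ) (k : ℕ) (h : Hist S A) :
    A → ℝ :=
  fun a => if a = M.foAct T c (k - h.2.length) (M.infoOf h) then 1 else 0

lemma length_eq_of_obsHist {h h' : Hist S A} {O : S → Z} (he : obsHist O h = obsHist O h') :
    h.2.length = h'.2.length := by
  have := congrArg (fun x => (Prod.snd x).length) he
  simpa [obsHist] using this

/-- The (allowed-action-restricted) finite-horizon optimal strategy `σFO_k`. -/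
def stratFO [Nonempty A] (M : POMDP S A Z) (T : Set S) (c : S → A → ℝ) (k : ℕ) :
    Strategy S A Z M.obs where
  act := M.actFO T c k
  act_nonneg := by intro h a; unfold actFO; split_ifs <;> norm_num
  act_sum := by intro h; unfold actFO; simp
  obsBased := by
    intro h h' hobs
    have hlen : h.2.length = h'.2.length := length_eq_of_obsHist hobs
    have hinfo : M.infoOf h = M.infoOf h' := by
      unfold infoOf
      exact M.infoOfAux_obs h.2 h'.2 h.1 h'.1
        (congrArg Prod.snd hobs) (congrArg Prod.fst hobs)
    unfold actFO
    rw [hlen, hinfo]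

/-- The strategy `σ*_k`: play `σFO_k` for the first `k` steps, then `σ_Allow`. -/
def stratStar [Nonempty A] (M : POMDP S A Z) (T : Set S) (c : S → A → ℝ) (k : ℕ) :
    Strategy S A Z M.obs where
  act := fun h =>
    if h.2.length < k then M.actFO T c k h else M.actAllowFrom T M.suppInitF h
  act_nonneg := by
    intro h a; split_ifs with hl
    · exact (M.stratFO T c k).act_nonneg h a
    · exact (M.stratAllowFrom T M.suppInitF).act_nonneg h a
  act_sum := by
    intro h; split_ifs with hl
    · exact (M.stratFO T c k).act_sum h
    · exact (M.stratAllowFrom T M.suppInitF).act_sum h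
  obsBased := by
    intro h h' hobs
    have hlen : h.2.length = h'.2.length := length_eq_of_obsHist hobs
    rw [hlen]
    split_ifs with hl
    · exact (M.stratFO T c k).obsBased h h' hobs
    · exact (M.stratAllowFrom T M.suppInitF).obsBased h h' hobs

/-- `α_k`: the probability that `T` is not reached within the first `k`
steps when playing `σ*_k`. -/
def alphaK [Nonempty A] (M : POMDP S A Z) (T : Set S) (c : S → A → ℝ) (k : ℕ) : ℝ :=
  1 - M.probReachBy T (M.stratStar T c k) k

end POMDP

/-! Play `σ_Allow` from the initial belief-support. Its expected cost is the `λ0`-average of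
the costs `T_Allow(s, Supp λ0)` of its runs from the single states `s ∈ Supp λ0`, hence at
most `U_Allow`. If `U_Allow` is finite, so is this cost; since every step outside `T` costs
at least `1`, a strategy that misses `T` with probability `ε > 0` pays at least `n ε` within
`n` steps, so `σ_Allow` is almost-sure winning and therefore bounds `optCost` from above. -/

namespace POMDP

variable {S A Z : Type} [Fintype S] [Fintype A] [Fintype Z]

def listsOfLength (A S : Type) [Fintype A] [Fintype S] : ℕ → Finset (List (A × S))
  | 0 => {[]}
  | n+1 => (univ ×ˢ listsOfLength A S n).image fun p => p.1 :: p.2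

lemma mem_listsOfLength :
    ∀ {n : ℕ} {l : List (A × S)}, l ∈ listsOfLength A S n ↔ l.length = n
  | 0, l => by simp [listsOfLength, List.length_eq_zero_iff]
  | n+1, [] => by simp [listsOfLength]
  | n+1, p :: r => by
      simp only [listsOfLength, mem_image, mem_product, mem_univ, true_and, List.cons.injEq,
        List.length_cons, Nat.add_right_cancel_iff]
      constructor
      · rintro ⟨_, hq, rfl, rfl⟩
        exact mem_listsOfLength.1 hq
      · exact fun h => ⟨(p, r), mem_listsOfLength.2 h, rfl, rfl⟩

lemma sum_listsOfLength_succ {β : Type*} [AddCommMonoid β] (n : ℕ) (f : List (A × S) → β) :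
    ∑ l ∈ listsOfLength A S (n+1), f l =
      ∑ p : A × S, ∑ l ∈ listsOfLength A S n, f (p :: l) := by
  rw [listsOfLength, sum_image, sum_product]
  rintro ⟨p, r⟩ - ⟨q, t⟩ - h
  simpa [Prod.ext_iff] using h

def histsOfLength (S A : Type) [Fintype S] [Fintype A] (n : ℕ) : Finset (Hist S A) :=
  univ ×ˢ listsOfLength A S n

lemma mem_histsOfLength {n : ℕ} {h : Hist S A} :
    h ∈ histsOfLength S A n ↔ h.2.length = n := by
  simp [histsOfLength, mem_listsOfLength]

section PathProbability

variable (M : POMDP S A Z) (σ : Strategy S A Z M.obs)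

lemma hprobAux_eq_zero_of_length_ne :
    ∀ {n : ℕ} (s : S) {l : List (A × S)}, l.length ≠ n → M.hprobAux σ n s l = 0
  | 0, _, [], h => absurd rfl h
  | 0, _, _ :: _, _ => rfl
  | _+1, _, [], _ => rfl
  | n+1, _, (_, s') :: _, h => by
      simp only [hprobAux, hprobAux_eq_zero_of_length_ne s' (n := n) (by simpa using h), zero_mul]

lemma hprob_eq_zero_of_notMem_histsOfLength {n : ℕ} {h : Hist S A}
    (hh : h ∉ histsOfLength S A n) :
    M.hprob σ n h = 0 :=
  M.hprobAux_eq_zero_of_length_ne σ h.1 (mt mem_histsOfLength.2 hh)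

lemma hprobAux_nonneg : ∀ (n : ℕ) (s : S) (l : List (A × S)), 0 ≤ M.hprobAux σ n s l
  | 0, s, [] => by simpa [hprobAux] using M.init_nonneg s
  | 0, _, _ :: _ => le_rfl
  | _+1, _, [] => le_rfl
  | n+1, s, (a, s') :: r =>
      mul_nonneg (mul_nonneg (hprobAux_nonneg n s' r) (σ.act_nonneg _ a)) (M.δ_nonneg s' a s)

lemma hprob_nonneg (n : ℕ) (h : Hist S A) : 0 ≤ M.hprob σ n h :=
  M.hprobAux_nonneg σ n h.1 h.2

lemma sum_hprobAux_succ_cons (n : ℕ) (a : A) (s' : S) (l : List (A × S)) :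
    ∑ s, M.hprobAux σ (n+1) s ((a, s') :: l) = M.hprobAux σ n s' l * σ.act (s', l) a := by
  simp only [hprobAux, ← mul_sum, M.δ_sum, mul_one]

lemma sum_hprob_histsOfLength : ∀ n : ℕ, ∑ h ∈ histsOfLength S A n, M.hprob σ n h = 1
  | 0 => by simpa [histsOfLength, listsOfLength, sum_product, hprob, hprobAux] using M.init_sum
  | n+1 => by
      have ih := sum_hprob_histsOfLength n
      rw [histsOfLength, sum_product] at ih ⊢
      calc ∑ s, ∑ l ∈ listsOfLength A S (n+1), M.hprob σ (n+1) (s, l)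
          = ∑ p : A × S, ∑ l ∈ listsOfLength A S n,
              ∑ s, M.hprobAux σ (n+1) s (p :: l) := by
            simp only [hprob, sum_listsOfLength_succ, sum_comm (γ := S)]
        _ = ∑ s', ∑ l ∈ listsOfLength A S n,
              M.hprobAux σ n s' l * ∑ a, σ.act (s', l) a := by
            simp only [sum_hprobAux_succ_cons, Fintype.sum_prod_type, mul_sum]
            rw [sum_comm]
            exact sum_congr rfl fun _ _ => sum_comm
        _ = 1 := by simpa only [σ.act_sum, mul_one, hprob] using ih

lemma hprobAux_eq_sum_init_mul_resetDirac : ∀ (n : ℕ) (s : S) (l : List (A × S)),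
    M.hprobAux σ n s l = ∑ s0, M.init s0 * (M.resetDirac s0).hprobAux σ n s l
  | 0, s, [] => by simp [hprobAux, resetDirac]
  | 0, _, _ :: _ => by simp [hprobAux]
  | _+1, _, [] => by simp [hprobAux]
  | n+1, s, (a, s') :: r => by
      simp only [hprobAux, hprobAux_eq_sum_init_mul_resetDirac n s' r, sum_mul, mul_assoc]
      rfl

lemma expTotalSteps_eq_sum (c : S → A → ℝ) (n : ℕ) :
    M.expTotalSteps c σ n = ∑ h ∈ histsOfLength S A n, M.hprob σ n h * totalCostH c h :=
  tsum_eq_sum fun _ hh => by rw [M.hprob_eq_zero_of_notMem_histsOfLength σ hh, zero_mul]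

lemma probReachBy_eq_sum (T : Set S) (n : ℕ) : M.probReachBy T σ n =
    ∑ h ∈ histsOfLength S A n, if visitsT T h then M.hprob σ n h else 0 :=
  tsum_eq_sum fun _ hh => by rw [M.hprob_eq_zero_of_notMem_histsOfLength σ hh, ite_self]

lemma expTotalSteps_eq_sum_init_mul_resetDirac (c : S → A → ℝ) (n : ℕ) :
    M.expTotalSteps c σ n = ∑ s0, M.init s0 * (M.resetDirac s0).expTotalSteps c σ n := by
  have hdirac s0 := (M.resetDirac s0).expTotalSteps_eq_sum σ c n
  simp only [expTotalSteps_eq_sum, hdirac, mul_sum]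
  rw [sum_comm]
  refine sum_congr rfl fun h _ => ?_
  rw [hprob, hprobAux_eq_sum_init_mul_resetDirac, sum_mul]
  exact sum_congr rfl fun _ _ => mul_assoc _ _ _

lemma probReachBy_le_one (T : Set S) (n : ℕ) : M.probReachBy T σ n ≤ 1 := by
  rw [probReachBy_eq_sum, ← M.sum_hprob_histsOfLength σ n]
  exact sum_le_sum fun h _ => by split_ifs <;> simp [M.hprob_nonneg σ n h]

end PathProbability

section Cost

variable {c : S → A → ℝ} {T : Set S}

lemma totalCostAux_nonneg (hc : ∀ s a, 0 ≤ c s a) :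
    ∀ (s : S) (l : List (A × S)), 0 ≤ totalCostAux c s l
  | _, [] => le_rfl
  | _, (a, s') :: r => add_nonneg (totalCostAux_nonneg hc s' r) (hc s' a)

lemma length_le_totalCostAux (hc1 : ∀ s ∉ T, ∀ a, 1 ≤ c s a) :
    ∀ (s : S) (l : List (A × S)), (∀ p ∈ l, p.2 ∉ T) →
      (l.length : ℝ) ≤ totalCostAux c s l
  | _, [], _ => by simp [totalCostAux]
  | _, (a, s') :: r, hl => by
      have hr := length_le_totalCostAux hc1 s' r fun p hp => hl p (List.mem_cons_of_mem _ hp)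
      have hs' := hc1 s' (hl (a, s') List.mem_cons_self) a
      simp only [totalCostAux, List.length_cons, Nat.cast_succ]
      linarith

variable (M : POMDP S A Z) (σ : Strategy S A Z M.obs)

lemma mul_one_sub_probReachBy_le_expTotalSteps (hc : ∀ s a, 0 ≤ c s a)
    (hc1 : ∀ s ∉ T, ∀ a, 1 ≤ c s a) (n : ℕ) :
    n * (1 - M.probReachBy T σ n) ≤ M.expTotalSteps c σ n := by
  rw [expTotalSteps_eq_sum, probReachBy_eq_sum, ← M.sum_hprob_histsOfLength σ n,
    ← sum_sub_distrib, mul_sum]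
  refine sum_le_sum fun h hh => ?_
  have hcost : 0 ≤ totalCostH c h := totalCostAux_nonneg hc h.1 h.2
  by_cases hv : visitsT T h
  · simpa [hv] using mul_nonneg (M.hprob_nonneg σ n h) hcost
  · have hlen : (n : ℝ) ≤ totalCostH c h := by
      rw [← mem_histsOfLength.1 hh]
      exact length_le_totalCostAux hc1 h.1 h.2 fun p hp hpT => hv (Or.inr ⟨p, hp, hpT⟩)
    rw [if_neg hv, sub_zero, mul_comm]
    exact mul_le_mul_of_nonneg_left hlen (M.hprob_nonneg σ n h)

lemma val_eq_top_of_probReach_lt_one (hc : ∀ s a, 0 ≤ c s a)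
    (hc1 : ∀ s ∉ T, ∀ a, 1 ≤ c s a)
    (hlt : M.probReach T σ < 1) : M.Val c σ = ⊤ := by
  have hreach : ∀ n, M.probReachBy T σ n ≤ M.probReach T σ :=
    le_ciSup ⟨1, Set.forall_mem_range.2 (M.probReachBy_le_one σ T)⟩
  have hcost : Tendsto (fun n : ℕ => n * (1 - M.probReach T σ)) atTop atTop :=
    tendsto_natCast_atTop_atTop.atTop_mul_const (sub_pos.2 hlt)
  refine EReal.eq_top_iff_forall_lt _ |>.2 fun y => ?_
  refine lt_of_lt_of_le (EReal.coe_lt_coe_iff.2 (lt_add_one y)) ?_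
  refine le_limsup_of_frequently_le (Eventually.frequently ?_) (by isBoundedDefault)
  filter_upwards [hcost.eventually_ge_atTop (y + 1)] with n hn
  refine EReal.coe_le_coe_iff.2 (hn.trans ?_ |>.trans
    (M.mul_one_sub_probReachBy_le_expTotalSteps σ hc hc1 n))
  exact mul_le_mul_of_nonneg_left (by linarith [hreach n]) n.cast_nonneg

lemma almostSure_of_val_ne_top (hc : ∀ s a, 0 ≤ c s a) (hc1 : ∀ s ∉ T, ∀ a, 1 ≤ c s a)
    (hval : M.Val c σ ≠ ⊤) : M.AlmostSure T σ :=
  le_antisymm (ciSup_le (M.probReachBy_le_one σ T)) <|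
    not_lt.1 fun hlt => hval (M.val_eq_top_of_probReach_lt_one σ hc hc1 hlt)

lemma optCost_le_val (hσ : M.AlmostSure T σ) : M.optCost T c ≤ M.Val c σ :=
  iInf_le (fun σ' : {σ' // M.AlmostSure T σ'} => M.Val c σ'.1) ⟨σ, hσ⟩

lemma val_le_of_forall_resetDirac_val_le {x : EReal}
    (hx : ∀ s0, 0 < M.init s0 → (M.resetDirac s0).Val c σ ≤ x) : M.Val c σ ≤ x := by
  refine EReal.le_of_forall_lt_iff_le.1 fun y hy => limsup_le_of_le (by isBoundedDefault) ?_
  have hev : ∀ s0 ∈ M.suppInitF,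
      ∀ᶠ n in atTop, (M.resetDirac s0).expTotalSteps c σ n < y :=
    fun s0 hs0 => (eventually_lt_of_limsup_lt ((hx s0 (mem_filter.1 hs0).2).trans_lt hy)).mono
      fun _ hn => EReal.coe_lt_coe_iff.1 hn
  filter_upwards [(eventually_all_finset _).2 hev] with n hn
  refine EReal.coe_le_coe_iff.2 ?_
  calc M.expTotalSteps c σ n
      = ∑ s0, M.init s0 * (M.resetDirac s0).expTotalSteps c σ n :=
        M.expTotalSteps_eq_sum_init_mul_resetDirac σ c n
    _ ≤ ∑ s0, M.init s0 * y := sum_le_sum fun s0 _ => by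
        rcases (M.init_nonneg s0).eq_or_lt with h0 | h0
        · simp [← h0]
        · exact mul_le_mul_of_nonneg_left (hn s0 (mem_filter.2 ⟨mem_univ _, h0⟩)).le h0.le
    _ = y := by rw [← sum_mul, M.init_sum, one_mul]

end Cost

end POMDP

theorem optCost_le_UAllow_general
    {S A Z : Type} [Fintype S] [Fintype A] [Fintype Z] [Nonempty A]
    (M : POMDP S A Z) (T : Set S) (c : S → A → ℝ)
    (hc0 : ∀ t ∈ T, ∀ a, c t a = 0)
    (hc1 : ∀ s ∉ T, ∀ a, 1 ≤ c s a)
    (hinit : M.suppInitF ∈ M.BeliefWin T) :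
    M.optCost T c ≤ M.UAllow T c := by
  have hc : ∀ s a, 0 ≤ c s a := fun s a => by
    by_cases hs : s ∈ T
    · exact (hc0 s hs a).ge
    · exact zero_le_one.trans (hc1 s hs a)
  set σ := M.stratAllowFrom T M.suppInitF
  have hval : M.Val c σ ≤ M.UAllow T c :=
    M.val_le_of_forall_resetDirac_val_le σ fun s0 hs0 =>
      le_iSup₂_of_le M.suppInitF hinit <| le_iSup₂_of_le (f := fun s _ => M.TAllow T c s _) s0
        (mem_filter.2 ⟨mem_univ _, hs0⟩) le_rfl
  rcases eq_or_ne (M.UAllow T c) ⊤ with htop | htop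
  · exact htop ▸ le_top
  have hwin := M.almostSure_of_val_ne_top σ hc hc1 (ne_top_of_le_ne_top htop hval)
  exact (M.optCost_le_val σ hwin).trans hval

/-- `optCost ≤ U_Allow`. -/
theorem optCost_le_UAllow
    {S A Z : Type} [Fintype S] [Fintype A] [Fintype Z] [Nonempty A]
    (M : POMDP S A Z) (T : Set S) (c : S → A → ℝ)
    (habs : M.Absorbing T)
    (hc0 : ∀ t ∈ T, ∀ a, c t a = 0)
    (hc1 : ∀ s ∉ T, ∀ a, 1 ≤ c s a)
    (hinit : M.suppInitF ∈ M.BeliefWin T) :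
    M.optCost T c ≤ M.UAllow T c :=
  optCost_le_UAllow_general M T c hc0 hc1 hinit
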